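/- Let x, y > 0, let R = [0, x] × [0, y] ⊆ ℝ² with center c = (x/2, y/2), let f : ℝ² → ℝ be a nonzero linear functional, and let k ∈ ℝ with k ≠ f(c). Then the straight line {p : f(p) = k} does not bisect the area of R: the Lebesgue measure of {p ∈ R : f(p) ≤ k} is not equal to x·y/2. -/
import Mathlib


open MeasureTheory Set

/-- A line not through the center of the rectangle `R = [0,x] × [0,y]`, given as
the level set `{p | f p = k}` of a nonzero linear functional `f` with
`k ≠ f (x/2, y/2)`, does not bisect the area of the rectangle. -/
theorem line_off_center_does_not_bisect_rectangle (x y : ℝ) (hx : 0 < x) (hy : 0 < y)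
    (f : ℝ × ℝ →ₗ[ℝ] ℝ) (hf : f ≠ 0) (k : ℝ) (hk : k ≠ f (x / 2, y / 2)) :
    volume {p : ℝ × ℝ | p ∈ Set.Icc 0 x ×ˢ Set.Icc 0 y ∧ f p ≤ k} ≠
      ENNReal.ofReal (x * y / 2) := by
  intro hvol
  have hfc : f (x, y) = 2 * f (x / 2, y / 2) := by
    have h : (x, y) = (2 : ℝ) • ((x / 2, y / 2) : ℝ × ℝ) := by
      simp [Prod.ext_iff]; constructor <;> ring
    rw [h, LinearMap.map_smul]
    simp [smul_eq_mul]
  set c : ℝ := f (x / 2, y / 2) with hc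
  have hfcont : Continuous f := f.continuous_of_finiteDimensional
  set R : Set (ℝ × ℝ) := Set.Icc 0 x ×ˢ Set.Icc 0 y with hRdef
  have hmR : MeasurableSet R := (measurableSet_Icc.prod measurableSet_Icc)
  set A : Set (ℝ × ℝ) := {p : ℝ × ℝ | p ∈ R ∧ f p ≤ k} with hAdef
  set B : Set (ℝ × ℝ) := {p : ℝ × ℝ | p ∈ R ∧ 2 * c - k ≤ f p} with hBdef
  have hmA : MeasurableSet A := by
    have : A = R ∩ f ⁻¹' (Set.Iic k) := by ext p; simp [hAdef, and_comm]
    rw [this]; exact hmR.inter (hfcont.measurable measurableSet_Iic)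
  have hmB : MeasurableSet B := by
    have : B = R ∩ f ⁻¹' (Set.Ici (2 * c - k)) := by
      ext p; simp [hBdef, and_comm]
    rw [this]; exact hmR.inter (hfcont.measurable measurableSet_Ici)
  -- central symmetry
  have hmp : MeasurePreserving (fun p : ℝ × ℝ => (x, y) - p) volume volume :=
    Measure.measurePreserving_sub_left volume (x, y)
  have hσR : ∀ p : ℝ × ℝ, (x, y) - p ∈ R ↔ p ∈ R := by
    intro p
    simp only [hRdef, Set.mem_prod, Prod.fst_sub, Prod.snd_sub, Set.mem_Icc]
    constructor <;> rintro ⟨⟨h1, h2⟩, ⟨h3, h4⟩⟩ <;>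
      exact ⟨⟨by linarith, by linarith⟩, ⟨by linarith, by linarith⟩⟩
  have hpre : (fun p : ℝ × ℝ => (x, y) - p) ⁻¹' A = B := by
    ext p
    simp only [hAdef, hBdef, Set.mem_preimage, Set.mem_setOf_eq, hσR p, map_sub, hfc, ← hc]
    constructor <;> rintro ⟨h1, h2⟩ <;> exact ⟨h1, by linarith⟩
  have hBA : volume B = volume A := by
    rw [← hpre]; exact hmp.measure_preimage hmA.nullMeasurableSet
  have hxy0 : 0 ≤ x * y := by positivity
  have hRvol : volume R = ENNReal.ofReal (x * y) := by
    rw [hRdef, Measure.volume_eq_prod, Measure.prod_prod, Real.volume_Icc,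
      Real.volume_Icc, ← ENNReal.ofReal_mul (by linarith)]
    norm_num
  have hsum : volume A + volume B = ENNReal.ofReal (x * y) := by
    rw [hBA, hvol, ← ENNReal.ofReal_add (by positivity) (by positivity)]
    norm_num
  have hRfin : volume R ≠ ⊤ := by rw [hRvol]; exact ENNReal.ofReal_ne_top
  -- the open strip / lens around the center has positive measure
  have hcmem : ∀ a b : ℝ, a < c → c < b →
      0 < volume ((Set.Ioo 0 x ×ˢ Set.Ioo 0 y) ∩ f ⁻¹' Set.Ioo a b) := by
    intro a b ha hb
    have hopen : IsOpen ((Set.Ioo 0 x ×ˢ Set.Ioo 0 y) ∩ f ⁻¹' Set.Ioo a b) :=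
      (isOpen_Ioo.prod isOpen_Ioo).inter (isOpen_Ioo.preimage hfcont)
    refine hopen.measure_pos volume ⟨(x / 2, y / 2), ?_⟩
    constructor
    · constructor <;> constructor <;> simp <;> linarith
    · exact ⟨ha, hb⟩
  rcases lt_or_gt_of_ne hk with hlt | hgt
  · -- k < c : A and B are disjoint and miss the open strip
    have hkc : k < 2 * c - k := by linarith
    set U := (Set.Ioo 0 x ×ˢ Set.Ioo 0 y) ∩ f ⁻¹' Set.Ioo k (2 * c - k) with hU
    have hUpos : 0 < volume U := hcmem k (2 * c - k) hlt (by linarith)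
    have hdisj : Disjoint A B := by
      rw [Set.disjoint_left]
      rintro p ⟨_, h1⟩ ⟨_, h2⟩
      linarith
    have hUsub : U ⊆ R \ (A ∪ B) := by
      rintro p ⟨hp1, hp2⟩
      have hpR : p ∈ R := ⟨Set.Ioo_subset_Icc_self hp1.1, Set.Ioo_subset_Icc_self hp1.2⟩
      refine ⟨hpR, ?_⟩
      rintro (⟨_, h⟩ | ⟨_, h⟩)
      · exact absurd hp2.1 (by linarith)
      · exact absurd hp2.2 (by linarith)
    have hABsub : A ∪ B ⊆ R := by rintro p (⟨h, _⟩ | ⟨h, _⟩) <;> exact h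
    have hunion : volume (A ∪ B) = ENNReal.ofReal (x * y) := by
      rw [measure_union hdisj hmB, hsum]
    have hdiff : volume (R \ (A ∪ B)) = 0 := by
      rw [measure_diff hABsub (hmA.union hmB).nullMeasurableSet
        (by rw [hunion]; exact ENNReal.ofReal_ne_top), hunion, ← hRvol]
      simp
    have : volume U = 0 := measure_mono_null hUsub hdiff
    exact absurd this (ne_of_gt hUpos)
  · -- c < k : A ∪ B = R and the intersection contains the open strip
    have hkc : 2 * c - k < k := by linarith
    set U := (Set.Ioo 0 x ×ˢ Set.Ioo 0 y) ∩ f ⁻¹' Set.Ioo (2 * c - k) k with hU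
    have hUpos : 0 < volume U := hcmem (2 * c - k) k (by linarith) hgt
    have hcover : A ∪ B = R := by
      ext p
      constructor
      · rintro (⟨h, _⟩ | ⟨h, _⟩) <;> exact h
      · intro hp
        rcases le_or_gt (f p) k with h | h
        · exact Or.inl ⟨hp, h⟩
        · exact Or.inr ⟨hp, by linarith⟩
    have hIE : volume (A ∪ B) + volume (A ∩ B) = volume A + volume B :=
      measure_union_add_inter A hmB
    rw [hcover, hRvol, hsum] at hIE
    have hint : volume (A ∩ B) = 0 := by
      have h0 : ENNReal.ofReal (x * y) + volume (A ∩ B) =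
          ENNReal.ofReal (x * y) + 0 := by rw [add_zero, hIE]
      exact (ENNReal.add_right_inj ENNReal.ofReal_ne_top).mp h0
    have hUsub : U ⊆ A ∩ B := by
      rintro p ⟨hp1, hp2⟩
      have hpR : p ∈ R := ⟨Set.Ioo_subset_Icc_self hp1.1, Set.Ioo_subset_Icc_self hp1.2⟩
      exact ⟨⟨hpR, le_of_lt hp2.2⟩, ⟨hpR, le_of_lt hp2.1⟩⟩
    have : volume U = 0 := measure_mono_null hUsub hint
    exact absurd this (ne_of_gt hUpos)
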